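/- Let M be a 3CM, I an instance over the signature of R_M, I_n = Step^SO_n(I), n ≥ 0, and let a_i (for a ∈ adom(I), 0 ≤ i ≤ m_a, a₀ = a) be the terms of adom(I_n) as given by the chain structure of the S₀-atoms (adom(I_n) = {a_i} and the S₀-atoms of I_n are exactly {S₀(a,b) ∈ I} ∪ {S₀(a_{i+1}, a_i) : 0 ≤ i < m_a}). Then the Flood-atoms of I_n are exactly {Flood(a) : Flood(a) ∈ I or End(a) ∈ I} ∪ {Flood(a) : S(b, a) ∈ I or S₀(b, a) ∈ I for some b} ∪ {Flood(a_i) : a ∈ adom(I), 0 ≤ i < m_a}. -/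

import Mathlib

set_option maxHeartbeats 1000000
set_option synthInstance.maxHeartbeats 1000000
set_option synthInstance.maxSize 512

attribute [local instance] Classical.propDecidable

noncomputable section

/-! ### Terms and atoms -/

/-- Variables: ordinary variables `Sum.inl n`, or fresh variables `Sum.inr (c, k)`
introduced by the trigger with code `c` for the head variable with code `k`. -/
abbrev Var : Type := ℕ ⊕ (ℕ × ℕ)

/-- Terms: constants `Sum.inl c` or variables `Sum.inr v`. -/
abbrev FTerm : Type := ℕ ⊕ Var

def ct (n : ℕ) : FTerm := Sum.inl n
def vt (n : ℕ) : FTerm := Sum.inr (Sum.inl n)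

/-- An atom: a predicate name together with its list of arguments. -/
abbrev Atom : Type := ℕ × List FTerm

/-- Active domain: all terms occurring in an atom set. -/
def adom (J : Set Atom) : Set FTerm := {t | ∃ a ∈ J, t ∈ a.2}

def atomVarsF (a : Atom) : Finset Var := (a.2.filterMap Sum.getRight?).toFinset

def varsF (A : Finset Atom) : Finset Var := A.biUnion atomVarsF

def setVars (J : Set Atom) : Set Var := {v | ∃ a ∈ J, Sum.inr v ∈ a.2}

/-! ### Substitutions and homomorphisms -/

abbrev Subst := Var → FTerm

def applyT (σ : Subst) : FTerm → FTerm
  | Sum.inl c => Sum.inl c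
  | Sum.inr v => σ v

def applyA (σ : Subst) (a : Atom) : Atom := (a.1, a.2.map (applyT σ))

def IsHomOn (σ : Subst) (A B : Set Atom) : Prop := ∀ a ∈ A, applyA σ a ∈ B

def HomBetween (A B : Set Atom) : Prop := ∃ σ : Subst, IsHomOn σ A B

def IsRetraction (σ : Subst) (A B : Set Atom) : Prop :=
  IsHomOn σ A B ∧ ∀ v ∈ setVars A ∩ setVars B, σ v = Sum.inr v

/-- Isomorphism of atom sets: a pair of mutually inverse homomorphisms. -/
def Isomorphic (A B : Set Atom) : Prop :=
  ∃ σ τ : Subst, IsHomOn σ A B ∧ IsHomOn τ B A ∧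
    (∀ a ∈ A, applyA τ (applyA σ a) = a) ∧ (∀ b ∈ B, applyA σ (applyA τ b) = b)

/-! ### Rules -/

/-- A rule is a pair (body, head). Its existential variables are the head variables
not occurring in the body; its frontier the variables shared by body and head.
A rule is Datalog when every head variable occurs in the body. -/
abbrev Rule : Type := Finset Atom × Finset Atom

def frontierOf (R : Rule) : Finset Var := varsF R.1 ∩ varsF R.2

def DatRules (Rset : Finset Rule) : Finset Rule := Rset.filter fun R => varsF R.2 ⊆ varsF R.1
def NDatRules (Rset : Finset Rule) : Finset Rule := Rset.filter fun R => ¬ varsF R.2 ⊆ varsF R.1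

/-- Satisfaction of a rule in an atom set. -/
def SatisfiesRule (J : Set Atom) (R : Rule) : Prop :=
  ∀ σ : Subst, IsHomOn σ (R.1 : Set Atom) J →
    ∃ σ' : Subst, (∀ v ∈ varsF R.1, σ' v = σ v) ∧ IsHomOn σ' (R.2 : Set Atom) J

def IsModel (Rset : Finset Rule) (I J : Set Atom) : Prop :=
  (∀ R ∈ Rset, SatisfiesRule J R) ∧ HomBetween I J

/-- BCQ entailment: every model of the KB satisfies the query. -/
def Entails (Rset : Finset Rule) (I q : Set Atom) : Prop :=
  ∀ J : Set Atom, IsModel Rset I J → HomBetween q J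

def IsUniversalModel (Rset : Finset Rule) (I U : Set Atom) : Prop :=
  IsModel Rset I U ∧ ∀ J : Set Atom, IsModel Rset I J → HomBetween U J

/-! ### Triggers -/

structure Trigger where
  rule : Rule
  sub : Subst

/-- Injective code of a trigger (a trigger is determined by its rule and the
restriction of its substitution to the body variables). -/
def Trigger.code (t : Trigger) : ℕ :=
  Encodable.encode (t.rule, (varsF t.rule.1).image fun v => (v, t.sub v))

/-- The canonical extension of the trigger substitution, mapping each existential
variable `z` to the fresh variable unique for `z` and the trigger. -/
def Trigger.extSub (t : Trigger) : Subst := fun v =>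
  if v ∈ varsF t.rule.1 then t.sub v
  else Sum.inr (Sum.inr (t.code, Encodable.encode v))

def Trigger.out (t : Trigger) : Finset Atom := t.rule.2.image (applyA t.extSub)

def Trigger.isOn (t : Trigger) (J : Set Atom) : Prop := IsHomOn t.sub (t.rule.1 : Set Atom) J

/-! ### Chase variants, derivations, chase termination classes -/

inductive ChaseVariant : Type
  | O | SO | R | E
deriving DecidableEq

def Applicable : ChaseVariant → Trigger → Set Atom → Prop
  | .O, t, J => ¬ ((t.out : Set Atom) ⊆ J)
  | .SO, t, J => ∀ t' : Trigger, t'.rule = t.rule → t'.isOn J →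
      (∀ v ∈ frontierOf t.rule, t'.sub v = t.sub v) → ¬ ((t'.out : Set Atom) ⊆ J)
  | .R, t, J => ¬ ∃ σ : Subst, IsRetraction σ (J ∪ (t.out : Set Atom)) J
  | .E, t, J => ¬ ∃ σ : Subst, IsHomOn σ (J ∪ (t.out : Set Atom)) J

def instSeq (I : Set Atom) (steps : ℕ → Option Trigger) : ℕ → Set Atom
  | 0 => I
  | n + 1 => instSeq I steps n ∪
      (match steps n with
        | none => (∅ : Set Atom)
        | some t => (t.out : Set Atom))

/-- A (possibly infinite) derivation from the knowledge base `⟨Rset, I⟩`. -/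
structure Deriv (Rset : Finset Rule) (I : Set Atom) where
  steps : ℕ → Option Trigger
  prefix_closed : ∀ n, steps n = none → steps (n + 1) = none
  valid : ∀ n t, steps n = some t →
    t.rule ∈ Rset ∧ t.isOn (instSeq I steps n) ∧ ¬ ((t.out : Set Atom) ⊆ instSeq I steps n)

def Deriv.inst {Rset : Finset Rule} {I : Set Atom} (D : Deriv Rset I) (n : ℕ) :
    Set Atom := instSeq I D.steps n

def Deriv.res {Rset : Finset Rule} {I : Set Atom} (D : Deriv Rset I) : Set Atom :=
  ⋃ n, D.inst n

def Deriv.Finite {Rset : Finset Rule} {I : Set Atom} (D : Deriv Rset I) : Prop :=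
  ∃ n, D.steps n = none

def Deriv.IsX {Rset : Finset Rule} {I : Set Atom} (X : ChaseVariant)
    (D : Deriv Rset I) : Prop :=
  ∀ n t, D.steps n = some t → Applicable X t (D.inst n)

def Deriv.Fair {Rset : Finset Rule} {I : Set Atom} (X : ChaseVariant)
    (D : Deriv Rset I) : Prop :=
  ∀ i, ∀ t : Trigger, t.rule ∈ Rset → t.isOn (D.inst i) → Applicable X t (D.inst i) →
    ∃ j, i < j ∧ ¬ Applicable X t (D.inst j)

/-- All-instance, all-derivation chase termination. -/
def CTall (X : ChaseVariant) (Rset : Finset Rule) : Prop :=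
  ∀ I : Finset Atom, ∀ D : Deriv Rset (I : Set Atom), D.IsX X → D.Fair X → D.Finite

/-- All-instance, some-derivation chase termination. -/
def CTex (X : ChaseVariant) (Rset : Finset Rule) : Prop :=
  ∀ I : Finset Atom, ∃ D : Deriv Rset (I : Set Atom), D.IsX X ∧ D.Fair X ∧ D.Finite

inductive CTQuant : Type
  | all | ex

def CT (X : ChaseVariant) : CTQuant → Finset Rule → Prop
  | .all => CTall X
  | .ex => CTex X

/-- The result of some fair `X`-derivation from `⟨Rset, J⟩`. -/
def ChX (X : ChaseVariant) (Rset : Finset Rule) (J : Set Atom) : Set Atom :=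
  if h : ∃ D : Deriv Rset J, D.IsX X ∧ D.Fair X then h.choose.res else J

/-! ### Gaifman graph, treewidth, bts -/

def gaifmanAdj (J : Set Atom) (u v : FTerm) : Prop :=
  u ≠ v ∧ ∃ a ∈ J, u ∈ a.2 ∧ v ∈ a.2

/-- The (Gaifman graph of the) atom set `J` has treewidth at most `k`:
there is a tree decomposition all of whose bags have size at most `k + 1`. -/
def TreewidthAtMost (J : Set Atom) (k : ℕ) : Prop :=
  ∃ (ι : Type) (T : SimpleGraph ι) (bag : ι → Finset FTerm),
    T.Connected ∧ T.IsAcyclic ∧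
    (∀ v ∈ adom J, ∃ i, v ∈ bag i) ∧
    (∀ u v : FTerm, gaifmanAdj J u v → ∃ i, u ∈ bag i ∧ v ∈ bag i) ∧
    (∀ v : FTerm, (SimpleGraph.induce {i | v ∈ bag i} T).Preconnected) ∧
    (∀ i, (bag i).card ≤ k + 1)

/-- Bounded-treewidth sets: for every instance, some universal model of bounded treewidth. -/
def IsBts (Rset : Finset Rule) : Prop :=
  ∀ I : Finset Atom, ∃ (k : ℕ) (U : Set Atom),
    IsUniversalModel Rset (I : Set Atom) U ∧ TreewidthAtMost U k

/-! ### Three-counter machines -/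

/-- A three-counter machine: states `0, …, m − 1` (state `0` is initial, standing for `q₁`),
and a partial transition function given by a finite table. -/
structure TCM where
  m : ℕ
  hm : 0 < m
  δ : List ((ℕ × Bool × Bool) × (ℕ × Int × Int))
  keys_nodup : (δ.map Prod.fst).Nodup
  wf : ∀ e ∈ δ, e.1.1 < m ∧ e.2.1 < m ∧ e.2.2.1.natAbs ≤ 1 ∧ e.2.2.2.natAbs ≤ 1

/-- A configuration: state, two counters, and the time counter. -/
abbrev Config : Type := ℕ × ℕ × ℕ × ℕ

def TCM.step (M : TCM) (q : ℕ) (b1 b2 : Bool) : Option (ℕ × Int × Int) :=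
  (M.δ.find? fun e => decide (e.1 = (q, b1, b2))).map Prod.snd

def TCM.next (M : TCM) (C : Config) : Option Config :=
  match M.step C.1 (decide (C.2.1 ≠ 0)) (decide (C.2.2.1 ≠ 0)) with
  | none => none
  | some (q', d1, d2) =>
      some (q', ((C.2.1 : ℤ) + d1).toNat, ((C.2.2.1 : ℤ) + d2).toNat, C.2.2.2 + 1)

def TCM.run (M : TCM) : ℕ → Option Config
  | 0 => some (0, 0, 0, 0)
  | n + 1 => (M.run n).bind M.next

/-- The machine halts: some reachable configuration has no successor. -/
def TCM.Halts (M : TCM) : Prop := ∃ n C, M.run n = some C ∧ M.next C = none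

/-! ### Prime encoding of configurations -/

/-- The least prime strictly greater than `n` (computably). -/
def nextPrime (n : ℕ) : ℕ := Nat.find (Nat.exists_infinite_primes (n + 1))

/-- `prm i` is the `(i+1)`-st prime `p_{i+1}`, i.e. `prm 0 = 2`. -/
def prm : ℕ → ℕ
  | 0 => 2
  | k + 1 => nextPrime (prm k)

/-- Encoding of a configuration as a natural number. -/
def TCM.enc (M : TCM) (C : Config) : ℕ :=
  prm C.1 * prm M.m ^ C.2.1 * prm (M.m + 1) ^ C.2.2.1 * prm (M.m + 2) ^ C.2.2.2

/-- `p = p₁ ⋯ p_{m+3}`. -/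
def TCM.p (M : TCM) : ℕ := ∏ i ∈ Finset.range (M.m + 3), prm i

/-- Decode the state from a residue modulo `M.p`. -/
def TCM.stateOf (M : TCM) (i : ℕ) : Option ℕ :=
  (List.range M.m).find? fun s => decide (prm s ∣ i)

/-- The canonical pair `(q_i, r_i)` realizing the prime encoding of the transitions. -/
def TCM.qr (M : TCM) (i : ℕ) : ℕ × ℕ :=
  match M.stateOf i with
  | none => (1, 1)
  | some s =>
      let b1 : Bool := decide (prm M.m ∣ i)
      let b2 : Bool := decide (prm (M.m + 1) ∣ i)
      match M.step s b1 b2 with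
      | none => (1, 1)
      | some (s', d1, d2) =>
          let e1 : ℤ := if b1 then d1 else max d1 0
          let e2 : ℤ := if b2 then d2 else max d2 0
          let num : ℕ := prm s' * prm (M.m + 2) *
            (if e1 = 1 then prm M.m else 1) * (if e2 = 1 then prm (M.m + 1) else 1)
          let den : ℕ := prm s *
            (if e1 = -1 then prm M.m else 1) * (if e2 = -1 then prm (M.m + 1) else 1)
          (num / Nat.gcd num den, den / Nat.gcd num den)

def TCM.qi (M : TCM) (i : ℕ) : ℕ := (M.qr i).1
def TCM.ri (M : TCM) (i : ℕ) : ℕ := (M.qr i).2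

/-- `g(n) = q_{n mod p} · n / r_{n mod p}`. -/
def TCM.g (M : TCM) (n : ℕ) : ℕ := M.qi (n % M.p) * n / M.ri (n % M.p)

/-- `gᵏ(2)`. -/
def TCM.gIter (M : TCM) (k : ℕ) : ℕ := (M.g)^[k] 2

/-- `G = {gᵏ(2) : k ∈ ℕ}`. -/
def TCM.Gset (M : TCM) : Set ℕ := Set.range M.gIter

/-! ### The rule set `R_M` -/

def pEnd : ℕ := 0
def pFlood : ℕ := 1
def pS0 : ℕ := 2
def pS : ℕ := 3
def pG : ℕ := 4
def pR (i : ℕ) : ℕ := 5 + 2 * i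
def pT (i : ℕ) : ℕ := 6 + 2 * i

/-- `j`-th vertex of an `S`-path of length `n` from variable `a` to variable `b`
with fresh intermediate variables `base + 1, …, base + n − 1`. -/
def pathVar (a b base n j : ℕ) : FTerm :=
  if j = 0 then vt a else if j = n then vt b else vt (base + j)

/-- The atoms of `Sⁿ(x_a, x_b)`: an `S`-path of length `n`. -/
def spath (a b base n : ℕ) : Finset Atom :=
  (Finset.range n).image fun j =>
    (pS, [pathVar a b base n j, pathVar a b base n (j + 1)])

/-- Rule (1): `S₀(x,y) → S(x,y)`. -/
def ruleS : Rule := ({(pS0, [vt 0, vt 1])}, {(pS, [vt 0, vt 1])})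

/-- Rule (2): `R_i(x,y) ∧ S(y,z) → R_{i+1}(x,z)` (indices modulo `p`). -/
def ruleR (M : TCM) (i : ℕ) : Rule :=
  ({(pR i, [vt 0, vt 1]), (pS, [vt 1, vt 2])}, {(pR ((i + 1) % M.p), [vt 0, vt 2])})

/-- Rule (3): `T_i(x,y,z) ∧ S^{r_i}(y,y′) ∧ S^{q_i}(z,z′) → T_i(x,y′,z′)`. -/
def ruleT (M : TCM) (i : ℕ) : Rule :=
  (({(pT i, [vt 0, vt 1, vt 2])} : Finset Atom) ∪ spath 1 3 10 (M.ri i) ∪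
      spath 2 4 (11 + M.ri i) (M.qi i),
    {(pT i, [vt 0, vt 3, vt 4])})

/-- Rule (4): `S(x,y) → Flood(y)`. -/
def ruleFloodProp : Rule := ({(pS, [vt 0, vt 1])}, {(pFlood, [vt 1])})

/-- Rule (5): `End(x) → S(x,x)`. -/
def ruleSEnd : Rule := ({(pEnd, [vt 0])}, {(pS, [vt 0, vt 0])})

/-- Rule (6): `S²(x,y) → G(x,y)`. -/
def ruleGInit : Rule := (spath 0 1 10 2, {(pG, [vt 0, vt 1])})

/-- Rule (7): `G(x,y) ∧ R_i(x,y) ∧ T_i(x,y,z) → G(x,z)`. -/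
def ruleGStep (i : ℕ) : Rule :=
  ({(pG, [vt 0, vt 1]), (pR i, [vt 0, vt 1]), (pT i, [vt 0, vt 1, vt 2])},
    {(pG, [vt 0, vt 2])})

/-- Rule (8): `Flood(x) ∧ Flood(y) ∧ Flood(z) → G(x,y) ∧ ⋀_{j<p} (R_j(x,y) ∧ T_j(x,y,z))`. -/
def ruleFloodGen (M : TCM) : Rule :=
  ({(pFlood, [vt 0]), (pFlood, [vt 1]), (pFlood, [vt 2])},
    ({(pG, [vt 0, vt 1])} : Finset Atom) ∪
      (Finset.range M.p).biUnion fun j =>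
        {(pR j, [vt 0, vt 1]), (pT j, [vt 0, vt 1, vt 2])})

/-- Rule (9): `G(y,z) ∧ End(z) → ∃x (S₀(x,y) ∧ R₀(x,x) ∧ ⋀_{j<p} T_j(x,x,x))`. -/
def ruleEx (M : TCM) : Rule :=
  ({(pG, [vt 1, vt 2]), (pEnd, [vt 2])},
    ({(pS0, [vt 0, vt 1]), (pR 0, [vt 0, vt 0])} : Finset Atom) ∪
      (Finset.range M.p).biUnion fun j => {(pT j, [vt 0, vt 0, vt 0])})

/-- The rule set `R_M`. -/
def RM (M : TCM) : Finset Rule :=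
  ({ruleS, ruleFloodProp, ruleSEnd, ruleGInit, ruleFloodGen M, ruleEx M} : Finset Rule) ∪
    (Finset.range M.p).biUnion fun i => {ruleR M i, ruleT M i, ruleGStep i}

/-- The alternating Datalog/non-Datalog chase steps `Step^X_n`. -/
def StepX (X : ChaseVariant) (M : TCM) : ℕ → Set Atom → Set Atom
  | 0, I => ChX X (DatRules (RM M)) I
  | n + 1, I => ChX X (DatRules (RM M)) (ChX X (NDatRules (RM M)) (StepX X M n I))

/-- The constant `w`, the "well of positivity". -/
def wC : FTerm := ct 0

/-- The instance `{End(w)}`. -/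
def IE : Set Atom := {(pEnd, [wC])}

/-- Membership in the signature of `R_M` (predicate together with its arity). -/
def InSig (M : TCM) (a : Atom) : Prop :=
  ((a.1 = pEnd ∨ a.1 = pFlood) ∧ a.2.length = 1) ∨
  ((a.1 = pS0 ∨ a.1 = pS ∨ a.1 = pG ∨ ∃ i < M.p, a.1 = pR i) ∧ a.2.length = 2) ∨
  ((∃ i < M.p, a.1 = pT i) ∧ a.2.length = 3)

/-- The critical instance: all atoms `P(w, …, w)` over the signature of `R_M`. -/
def Crit (M : TCM) : Set Atom := {a | InSig M a ∧ ∀ t ∈ a.2, t = wC}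

/-- An `S`-path of length `k` from `s` to `t` in `J`. -/
def SPath (J : Set Atom) : ℕ → FTerm → FTerm → Prop
  | 0, s, t => s = t
  | k + 1, s, t => ∃ u, (pS, [s, u]) ∈ J ∧ SPath J k u t

/-- The restriction `J|_S`: atoms of `J` all of whose terms belong to `S`. -/
def restrictTo (J : Set Atom) (S : Set FTerm) : Set Atom := {a ∈ J | ∀ t ∈ a.2, t ∈ S}

/-- An explicit injective encoding of three-counter machines by natural numbers. -/
def encodeTCM (M : TCM) : ℕ := Encodable.encode (M.m, M.δ)


/-!
Only rules (1), (4) and (5) derive `Flood`-, `S`- or `End`-atoms, and each of them copies its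
arguments from a single body atom. Hence, along any chase, every `Flood`-atom traces back to `I`
or, via (1) and (4), to an `S₀`-atom (`FloodSound`). Conversely, every step ends with a Datalog
chase; fair SO-derivations always exist, and their results are closed under all Datalog rules,
in particular (1), (4) and (5). The given description of the `S₀`-atoms then yields both inclusions.
-/

lemma applyA_congr {σ τ : Subst} {a : Atom} (h : ∀ v ∈ atomVarsF a, σ v = τ v) :
    applyA σ a = applyA τ a := by
  refine congrArg _ (List.map_congr_left fun e he => ?_)
  cases e with
  | inl c => rfl
  | inr v => exact h v (by simpa [atomVarsF] using he)

lemma mem_varsF {A : Finset Atom} {a : Atom} (ha : a ∈ A) {v : Var} (hv : v ∈ atomVarsF a) :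
    v ∈ varsF A :=
  Finset.mem_biUnion.mpr ⟨a, ha, hv⟩

namespace Trigger

lemma isOn_mono {t : Trigger} {J J' : Set Atom} (h : t.isOn J) (hJ : J ⊆ J') : t.isOn J' :=
  fun a ha => hJ (h a ha)

lemma isOn_congr {t₁ t₂ : Trigger} (hr : t₁.rule = t₂.rule)
    (hs : ∀ v ∈ varsF t₁.rule.1, t₁.sub v = t₂.sub v) (J : Set Atom) :
    t₁.isOn J ↔ t₂.isOn J := by
  unfold Trigger.isOn IsHomOn
  rw [← hr]
  refine forall₂_congr fun a ha => ?_
  rw [applyA_congr fun v hv => hs v (mem_varsF ha hv)]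

lemma applicable_SO_congr {t₁ t₂ : Trigger} (hr : t₁.rule = t₂.rule)
    (hs : ∀ v ∈ varsF t₁.rule.1, t₁.sub v = t₂.sub v) (J : Set Atom) :
    Applicable .SO t₁ J ↔ Applicable .SO t₂ J := by
  simp only [Applicable, ← hr]
  refine forall_congr' fun t' => imp_congr_right fun _ => imp_congr_right fun _ =>
    imp_congr_left (forall₂_congr fun v hv => ?_)
  rw [hs v (Finset.mem_of_mem_inter_left hv)]

lemma not_applicable_SO_of_out_subset {t : Trigger} {J : Set Atom} (hon : t.isOn J)
    (hout : (t.out : Set Atom) ⊆ J) : ¬ Applicable .SO t J :=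
  fun happ => happ t rfl hon (fun _ _ => rfl) hout

lemma out_eq_image_of_datalog {t : Trigger} (hdat : varsF t.rule.2 ⊆ varsF t.rule.1) :
    t.out = t.rule.2.image (applyA t.sub) :=
  Finset.image_congr fun h hh => applyA_congr fun v hv => by
    simp [Trigger.extSub, hdat (mem_varsF hh hv)]

end Trigger

lemma instSeq_mono (I : Set Atom) (steps : ℕ → Option Trigger) : Monotone (instSeq I steps) :=
  monotone_nat_of_le_succ fun _ => Set.subset_union_left

namespace Deriv

variable {Rset : Finset Rule} {K : Set Atom} (D : Deriv Rset K)

lemma inst_subset_res (n : ℕ) : D.inst n ⊆ D.res := Set.subset_iUnion D.inst n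

lemma exists_inst_of_finset_subset_res {A : Finset Atom} (hA : (A : Set Atom) ⊆ D.res) :
    ∃ n, (A : Set Atom) ⊆ D.inst n :=
  (instSeq_mono K D.steps).directed_le.exists_mem_subset_of_finset_subset_biUnion hA

lemma inst_induction {P : Set Atom → Prop} (h0 : P K)
    (hstep : ∀ J (t : Trigger), t.rule ∈ Rset → t.isOn J → P J → P (J ∪ t.out)) (n : ℕ) :
    P (D.inst n) := by
  induction n with
  | zero => exact h0
  | succ n ih =>
    change P (D.inst n ∪ _)
    cases hs : D.steps n with
    | none => simpa using ih
    | some t =>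
      obtain ⟨hrule, hon, -⟩ := D.valid n t hs
      exact hstep _ t hrule hon ih

end Deriv

lemma subset_chX (X : ChaseVariant) (Rset : Finset Rule) (K : Set Atom) :
    K ⊆ ChX X Rset K := by
  unfold ChX
  split
  · next h => exact h.choose.inst_subset_res 0
  · exact subset_rfl

lemma chX_induction {P : Set Atom → Prop} (X : ChaseVariant) (Rset : Finset Rule) {K : Set Atom}
    (h0 : P K) (hstep : ∀ J (t : Trigger), t.rule ∈ Rset → t.isOn J → P J → P (J ∪ t.out))
    (hunion : ∀ f : ℕ → Set Atom, (∀ n, P (f n)) → P (⋃ n, f n)) : P (ChX X Rset K) := by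
  unfold ChX
  split
  · next h => exact hunion _ (h.choose.inst_induction h0 hstep)
  · exact h0

section FairDerivation

variable (Rset : Finset Rule) (K : Set Atom)

def trigOfGraph (x : Rule × List (Var × FTerm)) : Trigger :=
  ⟨x.1, fun v => if h : ∃ y, (v, y) ∈ x.2 then h.choose else vt 0⟩

def trigEnum (k : ℕ) : Trigger := trigOfGraph ((Denumerable.eqv _).symm k)

lemma exists_trigEnum (t : Trigger) :
    ∃ k, (trigEnum k).rule = t.rule ∧ ∀ v ∈ varsF t.rule.1, (trigEnum k).sub v = t.sub v := by
  set graph := (varsF t.rule.1).toList.map fun v => (v, t.sub v)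
  refine ⟨Denumerable.eqv _ (t.rule, graph), by rw [trigEnum, Equiv.symm_apply_apply]; rfl,
    fun v hv => ?_⟩
  have hgraph : ∃ y, (v, y) ∈ graph := ⟨t.sub v, List.mem_map_of_mem (Finset.mem_toList.mpr hv)⟩
  rw [trigEnum, Equiv.symm_apply_apply]
  change dite _ _ _ = _
  rw [dif_pos hgraph]
  obtain ⟨w, -, hw⟩ := List.mem_map.mp hgraph.choose_spec
  rw [Prod.mk.injEq] at hw
  rw [← hw.2, hw.1]

def applicableIdx (J : Set Atom) : Set ℕ :=
  {k | (trigEnum k).rule ∈ Rset ∧ (trigEnum k).isOn J ∧ Applicable .SO (trigEnum k) J}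

def leastApplicable (J : Set Atom) : Option Trigger :=
  if (applicableIdx Rset J).Nonempty then some (trigEnum (sInf (applicableIdx Rset J))) else none

def fairSeq : ℕ → Set Atom
  | 0 => K
  | n + 1 => fairSeq n ∪
      (match leastApplicable Rset (fairSeq n) with
        | none => (∅ : Set Atom)
        | some t => (t.out : Set Atom))

lemma instSeq_fairSeq (n : ℕ) :
    instSeq K (fun n => leastApplicable Rset (fairSeq Rset K n)) n = fairSeq Rset K n := by
  induction n with
  | zero => rfl
  | succ n ih => simp only [instSeq, fairSeq, ih]

lemma fairSeq_mono : Monotone (fairSeq Rset K) := fun m n h => by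
  simpa only [instSeq_fairSeq] using
    instSeq_mono K (fun n => leastApplicable Rset (fairSeq Rset K n)) h

variable {Rset} in
lemma leastApplicable_eq_some {J : Set Atom} {t : Trigger} (h : leastApplicable Rset J = some t) :
    t.rule ∈ Rset ∧ t.isOn J ∧ Applicable .SO t J := by
  unfold leastApplicable at h
  split at h
  · next hne => cases h; exact Nat.sInf_mem hne
  · cases h

variable {Rset K} in
lemma not_applicable_of_leastApplicable {n j : ℕ} {t : Trigger}
    (h : leastApplicable Rset (fairSeq Rset K n) = some t) (hj : n < j) :
    ¬ Applicable .SO t (fairSeq Rset K j) := by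
  have hout : (t.out : Set Atom) ⊆ fairSeq Rset K (n + 1) := by
    simp only [fairSeq, h]
    exact Set.subset_union_right
  exact Trigger.not_applicable_SO_of_out_subset
    (Trigger.isOn_mono (leastApplicable_eq_some h).2.1 (fairSeq_mono Rset K hj.le))
    (hout.trans (fairSeq_mono Rset K hj))

def fairDeriv : Deriv Rset K where
  steps n := leastApplicable Rset (fairSeq Rset K n)
  prefix_closed n hn := by
    have hstable : fairSeq Rset K (n + 1) = fairSeq Rset K n := by
      simp only [fairSeq, hn, Set.union_empty]
    simpa only [hstable] using hn
  valid n t h := by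
    obtain ⟨hrule, hon, happ⟩ := leastApplicable_eq_some h
    rw [instSeq_fairSeq]
    exact ⟨hrule, hon, happ t rfl hon fun _ _ => rfl⟩

lemma fairDeriv_inst (n : ℕ) : (fairDeriv Rset K).inst n = fairSeq Rset K n :=
  instSeq_fairSeq Rset K n

lemma fairDeriv_isX : (fairDeriv Rset K).IsX .SO := fun n t h => by
  simpa only [fairDeriv_inst] using (leastApplicable_eq_some h).2.2

/- If the trigger with index `k` stayed applicable from stage `i` on, every later stage would
apply a trigger of index at most `k`, and these indices are pairwise distinct. -/
lemma fairDeriv_fair : (fairDeriv Rset K).Fair .SO := by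
  intro i t hrule hon happ
  by_contra! hstays
  simp only [fairDeriv_inst] at hon happ hstays
  obtain ⟨k, hkr, hks⟩ := exists_trigEnum t
  have hks' : ∀ v ∈ varsF (trigEnum k).rule.1, (trigEnum k).sub v = t.sub v := hkr ▸ hks
  have hk : ∀ r, k ∈ applicableIdx Rset (fairSeq Rset K (i + 1 + r)) := fun r =>
    ⟨hkr ▸ hrule,
      (Trigger.isOn_congr hkr hks' _).mpr (Trigger.isOn_mono hon (fairSeq_mono Rset K (by omega))),
      (Trigger.applicable_SO_congr hkr hks' _).mpr (hstays _ (by omega))⟩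
  set f : ℕ → ℕ := fun r => sInf (applicableIdx Rset (fairSeq Rset K (i + 1 + r)))
  have hpick : ∀ r, leastApplicable Rset (fairSeq Rset K (i + 1 + r)) = some (trigEnum (f r)) :=
    fun r => by simp [leastApplicable, f, show (applicableIdx Rset _).Nonempty from ⟨k, hk r⟩]
  have hne : ∀ r₁ r₂, r₁ < r₂ → f r₁ ≠ f r₂ := fun r₁ r₂ hlt heq =>
    not_applicable_of_leastApplicable (hpick r₁) (j := i + 1 + r₂) (by omega)
      (heq ▸ (Nat.sInf_mem ⟨k, hk r₂⟩).2.2)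
  have hinj : Function.Injective f := fun r₁ r₂ heq => by
    by_contra hr
    rcases Nat.lt_or_gt_of_ne hr with h | h
    exacts [hne _ _ h heq, hne _ _ h heq.symm]
  exact Set.infinite_of_injective_forall_mem (s := Set.Iic k) hinj (fun r => Nat.sInf_le (hk r))
    (Set.finite_Iic k)

lemma exists_fair_SO : ∃ D : Deriv Rset K, D.IsX .SO ∧ D.Fair .SO :=
  ⟨fairDeriv Rset K, fairDeriv_isX Rset K, fairDeriv_fair Rset K⟩

end FairDerivation

lemma Deriv.Fair.isHomOn_res_of_datalog {Rset : Finset Rule} {K : Set Atom} {D : Deriv Rset K}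
    (hfair : D.Fair .SO) {ρ : Rule} (hρ : ρ ∈ Rset) (hdat : varsF ρ.2 ⊆ varsF ρ.1) {σ : Subst}
    (hσ : IsHomOn σ (ρ.1 : Set Atom) D.res) : IsHomOn σ (ρ.2 : Set Atom) D.res := by
  obtain ⟨i, hi⟩ := D.exists_inst_of_finset_subset_res (A := ρ.1.image (applyA σ))
    fun _ hx => by
      obtain ⟨a, ha, rfl⟩ := Finset.mem_image.mp hx
      exact hσ a ha
  have hon : Trigger.isOn ⟨ρ, σ⟩ (D.inst i) := fun a ha => hi (Finset.mem_image_of_mem _ ha)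
  obtain ⟨j, hj⟩ : ∃ j, ¬ Applicable .SO ⟨ρ, σ⟩ (D.inst j) := by
    by_cases happ : Applicable .SO ⟨ρ, σ⟩ (D.inst i)
    · obtain ⟨j, -, hj⟩ := hfair i ⟨ρ, σ⟩ hρ hon happ
      exact ⟨j, hj⟩
    · exact ⟨i, happ⟩
  simp only [Applicable, not_forall, not_not] at hj
  obtain ⟨t', hrule, -, hagree, hout⟩ := hj
  intro h hh
  refine D.inst_subset_res j (hout ?_)
  rw [Trigger.out_eq_image_of_datalog (hrule ▸ hdat), hrule]
  refine Finset.mem_image.mpr ⟨h, hh, applyA_congr fun v hv => hagree v ?_⟩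
  exact Finset.mem_inter.mpr ⟨hdat (mem_varsF hh hv), mem_varsF hh hv⟩

lemma isHomOn_chX_SO_of_datalog {Rset : Finset Rule} {K : Set Atom} {ρ : Rule} (hρ : ρ ∈ Rset)
    (hdat : varsF ρ.2 ⊆ varsF ρ.1) {σ : Subst}
    (hσ : IsHomOn σ (ρ.1 : Set Atom) (ChX .SO Rset K)) :
    IsHomOn σ (ρ.2 : Set Atom) (ChX .SO Rset K) := by
  have hex := exists_fair_SO Rset K
  simp only [ChX, dif_pos hex] at hσ ⊢
  exact hex.choose_spec.2.isHomOn_res_of_datalog hρ hdat hσ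

lemma subset_stepX_SO (M : TCM) (I : Set Atom) (n : ℕ) : I ⊆ StepX .SO M n I := by
  induction n with
  | zero => exact subset_chX _ _ _
  | succ n ih => exact ih.trans ((subset_chX _ _ _).trans (subset_chX _ _ _))

lemma isHomOn_stepX_SO_of_mem_datRules {M : TCM} {I : Set Atom} {n : ℕ} {ρ : Rule}
    (hρ : ρ ∈ DatRules (RM M)) {σ : Subst}
    (hσ : IsHomOn σ (ρ.1 : Set Atom) (StepX .SO M n I)) :
    IsHomOn σ (ρ.2 : Set Atom) (StepX .SO M n I) := by
  cases n <;> exact isHomOn_chX_SO_of_datalog hρ (Finset.mem_filter.mp hρ).2 hσ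

section StepXClosure

variable {M : TCM} {I : Set Atom} {n : ℕ}

lemma S_mem_stepX_of_S0_mem {b u : FTerm} (h : (pS0, [b, u]) ∈ StepX .SO M n I) :
    (pS, [b, u]) ∈ StepX .SO M n I := by
  have := isHomOn_stepX_SO_of_mem_datRules (ρ := ruleS)
    (Finset.mem_filter.mpr ⟨by simp [RM], by decide⟩)
    (σ := fun v => if v = Sum.inl 0 then b else u)
    (by simpa [ruleS, IsHomOn, applyA, applyT, vt] using h)
  simpa [ruleS, IsHomOn, applyA, applyT, vt] using this

lemma S_mem_stepX_of_End_mem {u : FTerm} (h : (pEnd, [u]) ∈ StepX .SO M n I) :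
    (pS, [u, u]) ∈ StepX .SO M n I := by
  have := isHomOn_stepX_SO_of_mem_datRules (ρ := ruleSEnd)
    (Finset.mem_filter.mpr ⟨by simp [RM], by decide⟩)
    (σ := fun _ => u) (by simpa [ruleSEnd, IsHomOn, applyA, applyT, vt] using h)
  simpa [ruleSEnd, IsHomOn, applyA, applyT, vt] using this

lemma flood_mem_stepX_of_S_mem {b u : FTerm} (h : (pS, [b, u]) ∈ StepX .SO M n I) :
    (pFlood, [u]) ∈ StepX .SO M n I := by
  have := isHomOn_stepX_SO_of_mem_datRules (ρ := ruleFloodProp)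
    (Finset.mem_filter.mpr ⟨by simp [RM], by decide⟩)
    (σ := fun v => if v = Sum.inl 0 then b else u)
    (by simpa [ruleFloodProp, IsHomOn, applyA, applyT, vt] using h)
  simpa [ruleFloodProp, IsHomOn, applyA, applyT, vt] using this

end StepXClosure

lemma eq_ruleS_or_of_mem_RM {M : TCM} {ρ : Rule} (hρ : ρ ∈ RM M) {h : Atom} (hh : h ∈ ρ.2)
    (hpred : h.1 = pFlood ∨ h.1 = pS ∨ h.1 = pEnd) :
    ρ = ruleS ∨ ρ = ruleFloodProp ∨ ρ = ruleSEnd := by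
  simp only [RM, Finset.mem_union, Finset.mem_insert, Finset.mem_singleton, Finset.mem_biUnion,
    Finset.mem_range] at hρ
  rcases hρ with (rfl | rfl | rfl | rfl | rfl | rfl) | ⟨i, -, rfl | rfl | rfl⟩
  · exact Or.inl rfl
  · exact Or.inr (Or.inl rfl)
  · exact Or.inr (Or.inr rfl)
  all_goals
    exfalso
    simp only [ruleGInit, ruleFloodGen, ruleEx, ruleR, ruleT, ruleGStep, spath, Finset.mem_union,
      Finset.mem_insert, Finset.mem_singleton, Finset.mem_biUnion, Finset.mem_range] at hh
    simp only [pFlood, pS, pEnd] at hpred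
    aesop (add norm unfold [pG, pR, pT, pS0]) (add safe (by omega))

lemma mem_out_of_mem_RM {M : TCM} {J : Set Atom} {t : Trigger} (hrule : t.rule ∈ RM M)
    (hon : t.isOn J) {x : Atom} (hx : x ∈ t.out) (hpred : x.1 = pFlood ∨ x.1 = pS ∨ x.1 = pEnd) :
    (∃ b u, x = (pS, [b, u]) ∧ (pS0, [b, u]) ∈ J) ∨
      (∃ b u, x = (pFlood, [u]) ∧ (pS, [b, u]) ∈ J) ∨
      (∃ u, x = (pS, [u, u]) ∧ (pEnd, [u]) ∈ J) := by
  obtain ⟨h, hh, rfl⟩ := Finset.mem_image.mp hx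
  have hext : varsF t.rule.2 ⊆ varsF t.rule.1 → applyA t.extSub h = applyA t.sub h := fun hdat =>
    applyA_congr fun v hv => by simp [Trigger.extSub, hdat (mem_varsF hh hv)]
  obtain ⟨rule, sub⟩ := t
  rcases eq_ruleS_or_of_mem_RM hrule hh hpred with rfl | rfl | rfl
  · have hb := hon _ (Finset.mem_singleton_self _)
    simp only [ruleS, Finset.mem_singleton] at hh
    subst hh
    rw [hext (show varsF ruleS.2 ⊆ varsF ruleS.1 by decide)]
    exact Or.inl ⟨_, _, rfl, hb⟩
  · have hb := hon _ (Finset.mem_singleton_self _)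
    simp only [ruleFloodProp, Finset.mem_singleton] at hh
    subst hh
    rw [hext (show varsF ruleFloodProp.2 ⊆ varsF ruleFloodProp.1 by decide)]
    exact Or.inr (Or.inl ⟨_, _, rfl, hb⟩)
  · have hb := hon _ (Finset.mem_singleton_self _)
    simp only [ruleSEnd, Finset.mem_singleton] at hh
    subst hh
    rw [hext (show varsF ruleSEnd.2 ⊆ varsF ruleSEnd.1 by decide)]
    exact Or.inr (Or.inr ⟨_, rfl, hb⟩)

structure FloodSound (I J : Set Atom) : Prop where
  flood : ∀ x ∈ J, x.1 = pFlood → ∃ u, x = (pFlood, [u]) ∧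
    ((pFlood, [u]) ∈ I ∨ (pEnd, [u]) ∈ I ∨ (∃ b, (pS, [b, u]) ∈ I) ∨ ∃ b, (pS0, [b, u]) ∈ J)
  s : ∀ b u, (pS, [b, u]) ∈ J →
    (pS, [b, u]) ∈ I ∨ (pS0, [b, u]) ∈ J ∨ (b = u ∧ (pEnd, [u]) ∈ I)
  end_mem : ∀ u, (pEnd, [u]) ∈ J → (pEnd, [u]) ∈ I

namespace FloodSound

variable {I : Set Atom}

lemma self {M : TCM} (hI : ∀ a ∈ I, InSig M a) : FloodSound I I where
  flood x hx hflood := by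
    obtain ⟨p, args⟩ := x
    obtain ⟨u, rfl⟩ : ∃ u, args = [u] := by
      rcases hI _ hx with ⟨-, hlen⟩ | ⟨hp, -⟩ | ⟨hp, -⟩
      · exact List.length_eq_one_iff.mp hlen
      all_goals simp only [pFlood, pS0, pS, pG, pR, pT] at hflood hp; omega
    simp only at hflood
    subst hflood
    exact ⟨u, rfl, Or.inl hx⟩
  s _ _ h := Or.inl h
  end_mem _ h := h

lemma iUnion {f : ℕ → Set Atom} (hf : ∀ n, FloodSound I (f n)) : FloodSound I (⋃ n, f n) where
  flood x hx hflood := by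
    obtain ⟨n, hn⟩ := Set.mem_iUnion.mp hx
    obtain ⟨u, rfl, hsrc⟩ := (hf n).flood _ hn hflood
    exact ⟨u, rfl, by simpa only [Set.mem_iUnion] using hsrc.imp_right (Or.imp_right
      (Or.imp_right fun ⟨b, hb⟩ => ⟨b, n, hb⟩))⟩
  s b u h := by
    obtain ⟨n, hn⟩ := Set.mem_iUnion.mp h
    exact ((hf n).s b u hn).imp_right (Or.imp_left fun h => Set.mem_iUnion.mpr ⟨n, h⟩)
  end_mem u h := by
    obtain ⟨n, hn⟩ := Set.mem_iUnion.mp h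
    exact (hf n).end_mem u hn

lemma union_out {M : TCM} {J : Set Atom} (hJ : FloodSound I J) {t : Trigger}
    (hrule : t.rule ∈ RM M) (hon : t.isOn J) : FloodSound I (J ∪ t.out) where
  flood x hx hflood := by
    rcases hx with hx | hx
    · obtain ⟨u, rfl, hsrc⟩ := hJ.flood x hx hflood
      exact ⟨u, rfl, hsrc.imp_right (Or.imp_right (Or.imp_right fun ⟨b, hb⟩ => ⟨b, Or.inl hb⟩))⟩
    rcases mem_out_of_mem_RM hrule hon hx (Or.inl hflood) with
      ⟨b, u, rfl, -⟩ | ⟨b, u, rfl, hS⟩ | ⟨u, rfl, -⟩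
    · simp [pS, pFlood] at hflood
    · refine ⟨u, rfl, ?_⟩
      rcases hJ.s b u hS with h | h | ⟨rfl, h⟩
      · exact Or.inr (Or.inr (Or.inl ⟨b, h⟩))
      · exact Or.inr (Or.inr (Or.inr ⟨b, Or.inl h⟩))
      · exact Or.inr (Or.inl h)
    · simp [pS, pFlood] at hflood
  s b u h := by
    rcases h with h | h
    · exact (hJ.s b u h).imp_right (Or.imp_left Or.inl)
    rcases mem_out_of_mem_RM hrule hon h (Or.inr (Or.inl rfl)) with
      ⟨b', u', heq, hS0⟩ | ⟨b', u', heq, -⟩ | ⟨u', heq, hEnd⟩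
    · simp only [Prod.mk.injEq, List.cons.injEq, and_true, true_and] at heq
      obtain ⟨rfl, rfl⟩ := heq
      exact Or.inr (Or.inl (Or.inl hS0))
    · simp [pS, pFlood] at heq
    · simp only [Prod.mk.injEq, List.cons.injEq, and_true, true_and] at heq
      obtain ⟨rfl, rfl⟩ := heq
      exact Or.inr (Or.inr ⟨rfl, hJ.end_mem _ hEnd⟩)
  end_mem u h := by
    rcases h with h | h
    · exact hJ.end_mem u h
    rcases mem_out_of_mem_RM hrule hon h (Or.inr (Or.inr rfl)) with
      ⟨_, _, heq, -⟩ | ⟨_, _, heq, -⟩ | ⟨_, heq, -⟩ <;> simp [pS, pFlood, pEnd] at heq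

lemma chX {M : TCM} {X : ChaseVariant} {Rset : Finset Rule} (hRset : Rset ⊆ RM M) {K : Set Atom}
    (hK : FloodSound I K) : FloodSound I (ChX X Rset K) :=
  chX_induction X Rset hK (fun _ _ hrule hon hJ => hJ.union_out (hRset hrule) hon)
    fun _ => iUnion

lemma stepX {M : TCM} (hI : ∀ a ∈ I, InSig M a) (n : ℕ) : FloodSound I (StepX .SO M n I) := by
  induction n with
  | zero => exact (self hI).chX (Finset.filter_subset _ _)
  | succ n ih => exact (ih.chX (Finset.filter_subset _ _)).chX (Finset.filter_subset _ _)

end FloodSound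

theorem stmt_15_general (M : TCM) (I : Finset Atom) (hI : ∀ a ∈ I, InSig M a) (n : ℕ)
    (mlen : FTerm → ℕ) (chain : FTerm → ℕ → FTerm)
    (hS0 : {x ∈ StepX ChaseVariant.SO M n (I : Set Atom) | x.1 = pS0} =
      {x : Atom | (x ∈ I ∧ x.1 = pS0) ∨
        ∃ a ∈ adom (I : Set Atom), ∃ i < mlen a, x = (pS0, [chain a (i + 1), chain a i])}) :
    {x ∈ StepX ChaseVariant.SO M n (I : Set Atom) | x.1 = pFlood} =
      {x : Atom | ∃ u : FTerm, x = (pFlood, [u]) ∧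
        (((pFlood, [u]) ∈ I ∨ (pEnd, [u]) ∈ I) ∨
         (∃ b : FTerm, (pS, [b, u]) ∈ I ∨ (pS0, [b, u]) ∈ I) ∨
         (∃ a ∈ adom (I : Set Atom), ∃ i < mlen a, u = chain a i))} := by
  set J := StepX ChaseVariant.SO M n (I : Set Atom)
  have hS0_mem : ∀ b u, (pS0, [b, u]) ∈ J ↔ (pS0, [b, u]) ∈ I ∨
      ∃ a ∈ adom (I : Set Atom), ∃ i < mlen a, b = chain a (i + 1) ∧ u = chain a i := fun b u => by
    simpa using Set.ext_iff.mp hS0 (pS0, [b, u])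
  have hIJ : (I : Set Atom) ⊆ J := subset_stepX_SO M I n
  ext x
  constructor
  · rintro ⟨hx, hflood⟩
    obtain ⟨u, rfl, hsrc⟩ := (FloodSound.stepX (fun a ha => hI a ha) n).flood x hx hflood
    refine ⟨u, rfl, ?_⟩
    rcases hsrc with h | h | ⟨b, h⟩ | ⟨b, h⟩
    · exact Or.inl (Or.inl h)
    · exact Or.inl (Or.inr h)
    · exact Or.inr (Or.inl ⟨b, Or.inl h⟩)
    rcases (hS0_mem b u).mp h with h | ⟨a, ha, i, hi, -, rfl⟩
    · exact Or.inr (Or.inl ⟨b, Or.inr h⟩)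
    · exact Or.inr (Or.inr ⟨a, ha, i, hi, rfl⟩)
  · rintro ⟨u, rfl, hsrc⟩
    refine ⟨?_, rfl⟩
    rcases hsrc with (h | h) | ⟨b, h | h⟩ | ⟨a, ha, i, hi, rfl⟩
    · exact hIJ h
    · exact flood_mem_stepX_of_S_mem (S_mem_stepX_of_End_mem (hIJ h))
    · exact flood_mem_stepX_of_S_mem (hIJ h)
    · exact flood_mem_stepX_of_S_mem (S_mem_stepX_of_S0_mem (hIJ h))
    · exact flood_mem_stepX_of_S_mem (S_mem_stepX_of_S0_mem
        ((hS0_mem _ _).mpr (Or.inr ⟨a, ha, i, hi, rfl, rfl⟩)))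

/-- characterization of the `Flood`-atoms of `Step^SO_n(I)`. -/
theorem stmt_15 (M : TCM) (I : Finset Atom) (hI : ∀ a ∈ I, InSig M a) (n : ℕ)
    (mlen : FTerm → ℕ) (chain : FTerm → ℕ → FTerm)
    (hbase : ∀ a ∈ adom (I : Set Atom), mlen a ≤ n ∧ chain a 0 = a)
    (hinj : ∀ a ∈ adom (I : Set Atom), ∀ b ∈ adom (I : Set Atom), ∀ i ≤ mlen a, ∀ j ≤ mlen b,
      chain a i = chain b j → a = b ∧ i = j)
    (hadom : adom (StepX ChaseVariant.SO M n (I : Set Atom)) =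
      {t | ∃ a ∈ adom (I : Set Atom), ∃ i ≤ mlen a, t = chain a i})
    (hS0 : {x ∈ StepX ChaseVariant.SO M n (I : Set Atom) | x.1 = pS0} =
      {x : Atom | (x ∈ I ∧ x.1 = pS0) ∨
        ∃ a ∈ adom (I : Set Atom), ∃ i < mlen a, x = (pS0, [chain a (i + 1), chain a i])}) :
    {x ∈ StepX ChaseVariant.SO M n (I : Set Atom) | x.1 = pFlood} =
      {x : Atom | ∃ u : FTerm, x = (pFlood, [u]) ∧
        (((pFlood, [u]) ∈ I ∨ (pEnd, [u]) ∈ I) ∨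
         (∃ b : FTerm, (pS, [b, u]) ∈ I ∨ (pS0, [b, u]) ∈ I) ∨
         (∃ a ∈ adom (I : Set Atom), ∃ i < mlen a, u = chain a i))} :=
  stmt_15_general M I hI n mlen chain hS0

end
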